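/- Let G be a finite connected cubic graph and let (I1,I2) be a pair of disjoint independent sets satisfying Conditions (I) and (II). Then every connected component of H contains at most one pair of red vertices that are adjacent in G (at most one red P2). -/

import Mathlib

open SimpleGraph

variable {V : Type*}

/-- A finset `I` is an independent set of `G`. -/
def FinsetIndep (G : SimpleGraph V) (I : Finset V) : Prop :=
  ∀ u ∈ I, ∀ v ∈ I, ¬ G.Adj u v

/-- Condition (I): `|I1| + |I2|` is maximum among all pairs of disjoint
independent sets of `G`. -/
def CondI (G : SimpleGraph V) (I1 I2 : Finset V) : Prop :=
  ∀ J1 J2 : Finset V, Disjoint J1 J2 → FinsetIndep G J1 → FinsetIndep G J2 →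
    J1.card + J2.card ≤ I1.card + I2.card

/-- The set of red vertices: the vertices outside `I1 ∪ I2`. -/
def redSet (I1 I2 : Finset V) : Set V := {v | v ∉ I1 ∧ v ∉ I2}

/-- The number of connected components of the subgraph of `G` induced on the
red vertices. -/
noncomputable def numRedComp (G : SimpleGraph V) (I1 I2 : Finset V) : ℕ :=
  Nat.card ((G.induce (redSet I1 I2)).ConnectedComponent)

/-- Condition (II): subject to Condition (I), the number of connected
components of the subgraph induced on the red vertices is minimum. -/
def CondII (G : SimpleGraph V) (I1 I2 : Finset V) : Prop :=
  ∀ J1 J2 : Finset V, Disjoint J1 J2 → FinsetIndep G J1 → FinsetIndep G J2 →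
    CondI G J1 J2 → numRedComp G I1 I2 ≤ numRedComp G J1 J2

/-- The auxiliary graph `H` on the red vertices: two distinct red vertices are
adjacent iff their distance in `G` is at most 2. -/
def Hgraph (G : SimpleGraph V) (I1 I2 : Finset V) : SimpleGraph (redSet I1 I2) where
  Adj x y := x ≠ y ∧ G.edist (x : V) (y : V) ≤ 2
  symm := by
    constructor
    rintro x y ⟨hne, hd⟩
    exact ⟨hne.symm, by rwa [SimpleGraph.edist_comm]⟩
  loopless := by constructor; rintro x ⟨hne, -⟩; exact hne rfl

/-!
In a maximum pair every red vertex has a neighbour in each of `I1` and `I2`, so in a graph of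
maximum degree 3 a red vertex has at most one red neighbour, and a red edge `uv` determines all
three neighbours of `u`. If a red vertex `x ∉ {u, v}` lies at distance at most 2 from `u`, then
`x` is not adjacent to `u` and the common neighbour `w` is black; exchanging `u` and `w` gives
another maximum pair, in which `xw` is a red edge. Moving the red edge in this way along a path
of `H` towards a second red edge `u'v'` eventually produces a red vertex with two red neighbours,
unless the two edges coincide.
-/

namespace SimpleGraph

variable (G : SimpleGraph V)

/-- `Hgraph G I1 I2` is `G.square` induced on the red vertices; unlike `Hgraph`, `G.square` does
not depend on the red set, which changes along the induction in `IsMaxPair.sym2_eq_of_isPath`. -/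
def square : SimpleGraph V where
  Adj x y := x ≠ y ∧ G.edist x y ≤ 2
  symm := ⟨fun _ _ h ↦ ⟨h.1.symm, edist_comm (G := G) ▸ h.2⟩⟩
  loopless := ⟨fun _ h ↦ h.1 rfl⟩

variable {G}

theorem adj_or_commonNeighbors_nonempty_of_square_adj {x y : V} (h : G.square.Adj x y) :
    G.Adj x y ∨ (G.commonNeighbors x y).Nonempty := by
  by_contra! hfar
  exact (two_lt_edist_iff.mpr ⟨h.1, hfar.1, hfar.2⟩).not_ge h.2

theorem eq_or_eq_or_eq_of_degree_le_three {r a b c d : V} [Fintype (G.neighborSet r)]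
    (hdeg : G.degree r ≤ 3) (ha : G.Adj r a) (hb : G.Adj r b) (hc : G.Adj r c)
    (hab : a ≠ b) (hac : a ≠ c) (hbc : b ≠ c) (hd : G.Adj r d) : d = a ∨ d = b ∨ d = c := by
  classical
  have hsub : {a, b, c} ⊆ G.neighborFinset r := by
    simp [Finset.insert_subset_iff, ha, hb, hc]
  have hcard : ({a, b, c} : Finset V).card = 3 :=
    Finset.card_eq_three.mpr ⟨a, b, c, hab, hac, hbc, rfl⟩
  have heq := Finset.eq_of_subset_of_card_le hsub (by rwa [card_neighborFinset_eq_degree, hcard])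
  simpa [← heq] using (G.mem_neighborFinset r d).mpr hd

end SimpleGraph

variable {G : SimpleGraph V}

theorem FinsetIndep.mono {I J : Finset V} (hI : FinsetIndep G I) (hJ : J ⊆ I) : FinsetIndep G J :=
  fun u hu v hv ↦ hI u (hJ hu) v (hJ hv)

theorem FinsetIndep.insert [DecidableEq V] {I : Finset V} {r : V} (hI : FinsetIndep G I)
    (hr : ∀ a ∈ I, ¬ G.Adj r a) : FinsetIndep G (insert r I) := by
  intro x hx y hy hxy
  rcases Finset.mem_insert.mp hx with rfl | hxI
  · rcases Finset.mem_insert.mp hy with rfl | hyI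
    · exact G.irrefl hxy
    · exact hr y hyI hxy
  · rcases Finset.mem_insert.mp hy with rfl | hyI
    · exact hr x hxI hxy.symm
    · exact hI x hxI y hyI hxy

theorem CondI.symm {J1 J2 : Finset V} (h : CondI G J1 J2) : CondI G J2 J1 :=
  fun K1 K2 hK h1 h2 ↦ by have := h K1 K2 hK h1 h2; omega

theorem redSet_comm (J1 J2 : Finset V) : redSet J1 J2 = redSet J2 J1 :=
  Set.ext fun _ ↦ and_comm

structure IsMaxPair (G : SimpleGraph V) (J1 J2 : Finset V) : Prop where
  disjoint : Disjoint J1 J2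
  indep_left : FinsetIndep G J1
  indep_right : FinsetIndep G J2
  max : CondI G J1 J2

namespace IsMaxPair

variable {J1 J2 : Finset V} (hJ : IsMaxPair G J1 J2)
include hJ

theorem symm : IsMaxPair G J2 J1 :=
  ⟨hJ.disjoint.symm, hJ.indep_right, hJ.indep_left, hJ.max.symm⟩

/-- Otherwise `r` could be added to `J1`. -/
theorem exists_adj_left {r : V} (hr : r ∈ redSet J1 J2) : ∃ a ∈ J1, G.Adj r a := by
  classical
  by_contra! hno
  have := hJ.max (insert r J1) J2 (Finset.disjoint_insert_left.mpr ⟨hr.2, hJ.disjoint⟩)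
    (hJ.indep_left.insert hno) hJ.indep_right
  rw [Finset.card_insert_of_notMem hr.1] at this
  omega

theorem exists_adj_right {r : V} (hr : r ∈ redSet J1 J2) : ∃ b ∈ J2, G.Adj r b :=
  hJ.symm.exists_adj_left (by rwa [redSet_comm])

variable [G.LocallyFinite] (hdeg : ∀ v, G.degree v ≤ 3)
include hdeg

theorem neighbors_of_red_adj {u v : V} (hu : u ∈ redSet J1 J2) (hv : v ∈ redSet J1 J2)
    (huv : G.Adj u v) : ∃ a ∈ J1, ∃ b ∈ J2, ∀ d, G.Adj u d → d = v ∨ d = a ∨ d = b := by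
  obtain ⟨a, ha, hua⟩ := hJ.exists_adj_left hu
  obtain ⟨b, hb, hub⟩ := hJ.exists_adj_right hu
  refine ⟨a, ha, b, hb, fun d ↦ eq_or_eq_or_eq_of_degree_le_three (hdeg u) huv hua hub ?_ ?_ ?_⟩
  · rintro rfl; exact hv.1 ha
  · rintro rfl; exact hv.2 hb
  · rintro rfl; exact Finset.disjoint_left.mp hJ.disjoint ha hb

theorem eq_of_red_adj {u v d : V} (hu : u ∈ redSet J1 J2) (hv : v ∈ redSet J1 J2)
    (hd : d ∈ redSet J1 J2) (huv : G.Adj u v) (hud : G.Adj u d) : d = v := by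
  obtain ⟨a, ha, b, hb, hnbr⟩ := hJ.neighbors_of_red_adj hdeg hu hv huv
  rcases hnbr d hud with h | rfl | rfl
  exacts [h, absurd ha hd.1, absurd hb hd.2]

theorem eq_of_adj_left {u v w w' : V} (hu : u ∈ redSet J1 J2) (hv : v ∈ redSet J1 J2)
    (huv : G.Adj u v) (hw : w ∈ J1) (huw : G.Adj u w) (hw' : w' ∈ J1) (huw' : G.Adj u w') :
    w' = w := by
  obtain ⟨a, ha, b, hb, hnbr⟩ := hJ.neighbors_of_red_adj hdeg hu hv huv
  have key : ∀ x ∈ J1, G.Adj u x → x = a := fun x hx hux ↦ by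
    rcases hnbr x hux with rfl | h | rfl
    exacts [absurd hx hv.1, h, absurd hb (Finset.disjoint_left.mp hJ.disjoint hx)]
  rw [key w hw huw, key w' hw' huw']

/-- The new first set is independent because `w` is the only neighbour of `u` in `J1`. -/
theorem swap_left [DecidableEq V] {u v w : V} (hu : u ∈ redSet J1 J2) (hv : v ∈ redSet J1 J2)
    (huv : G.Adj u v) (hw : w ∈ J1) (huw : G.Adj u w) :
    IsMaxPair G (insert u (J1.erase w)) J2 := by
  have hcard : (insert u (J1.erase w)).card = J1.card := by
    rw [Finset.card_insert_of_notMem (fun h ↦ hu.1 (Finset.mem_of_mem_erase h)),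
      Finset.card_erase_add_one hw]
  refine ⟨Finset.disjoint_insert_left.mpr ⟨hu.2, hJ.disjoint.mono_left (Finset.erase_subset _ _)⟩,
    (hJ.indep_left.mono (Finset.erase_subset _ _)).insert fun a ha hua ↦
      Finset.ne_of_mem_erase ha (hJ.eq_of_adj_left hdeg hu hv huv hw huw
        (Finset.mem_of_mem_erase ha) hua),
    hJ.indep_right, fun K1 K2 hK h1 h2 ↦ hcard ▸ hJ.max K1 K2 hK h1 h2⟩

theorem exists_shift {u v w : V} (hu : u ∈ redSet J1 J2) (hv : v ∈ redSet J1 J2)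
    (huv : G.Adj u v) (hw : w ∉ redSet J1 J2) (huw : G.Adj u w) :
    ∃ K1 K2, IsMaxPair G K1 K2 ∧ w ∈ redSet K1 K2 ∧
      ∀ z ≠ u, z ∈ redSet J1 J2 → z ∈ redSet K1 K2 := by
  classical
  have hnot : ∀ {I : Finset V} {z}, z ≠ u → z ∉ I → z ∉ insert u (I.erase w) := fun hzu hz h ↦
    (Finset.mem_insert.mp h).elim hzu (fun h ↦ hz (Finset.mem_of_mem_erase h))
  have hw_not : ∀ {I : Finset V}, w ∉ insert u (I.erase w) := fun h ↦
    (Finset.mem_insert.mp h).elim huw.ne.symm (Finset.notMem_erase w _)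
  by_cases hw1 : w ∈ J1
  · exact ⟨_, _, hJ.swap_left hdeg hu hv huv hw1 huw,
      ⟨hw_not, Finset.disjoint_left.mp hJ.disjoint hw1⟩, fun z hzu hz ↦ ⟨hnot hzu hz.1, hz.2⟩⟩
  · have hw2 : w ∈ J2 := by by_contra h; exact hw ⟨hw1, h⟩
    rw [redSet_comm] at hu hv
    exact ⟨_, _, (hJ.symm.swap_left hdeg hu hv huv hw2 huw).symm, ⟨hw1, hw_not⟩,
      fun z hzu hz ↦ ⟨hz.1, hnot hzu hz.2⟩⟩

end IsMaxPair

theorem IsMaxPair.sym2_eq_of_isPath [G.LocallyFinite] (hdeg : ∀ v, G.degree v ≤ 3)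
    {u u' : V} (p : G.square.Walk u u') (hp : p.IsPath) {J1 J2 : Finset V} {v v' : V}
    (hJ : IsMaxPair G J1 J2) (hred : ∀ z ∈ p.support, z ∈ redSet J1 J2)
    (hv : v ∈ redSet J1 J2) (hv' : v' ∈ redSet J1 J2)
    (huv : G.Adj u v) (hu'v' : G.Adj u' v') : s(u, v) = s(u', v') := by
  induction p generalizing J1 J2 v with
  | nil =>
    rw [hJ.eq_of_red_adj hdeg (hred _ (by simp)) hv hv' huv hu'v']
  | @cons u x u' hux q ih =>
    obtain ⟨hq, hu_q⟩ := (Walk.cons_isPath_iff hux q).mp hp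
    have hred_q : ∀ z ∈ q.support, z ∈ redSet J1 J2 := fun z hz ↦ hred z (by simp [hz])
    have hu : u ∈ redSet J1 J2 := hred u (by simp)
    have hx : x ∈ redSet J1 J2 := hred_q x q.start_mem_support
    by_cases hxv : x = v
    · subst hxv
      exact Sym2.eq_swap.trans (ih hq hJ hred_q hu hv' huv.symm hu'v')
    by_cases huv' : u = v'
    · subst huv'
      rw [hJ.eq_of_red_adj hdeg hu hv (hred_q u' q.end_mem_support) huv hu'v'.symm, Sym2.eq_swap]
    rcases adj_or_commonNeighbors_nonempty_of_square_adj hux with hadj | ⟨w, huw, hxw⟩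
    · exact absurd (hJ.eq_of_red_adj hdeg hu hv hx huv hadj) hxv
    by_cases hw : w ∈ redSet J1 J2
    · obtain rfl := hJ.eq_of_red_adj hdeg hu hv hw huv huw
      exact absurd (hJ.eq_of_red_adj hdeg hw hu hx huv.symm hxw.symm) hux.1.symm
    -- Shift the red edge from `uv` to `xw`; the rest of the path stays red since it avoids `u`.
    obtain ⟨K1, K2, hK, hwK, hsub⟩ := hJ.exists_shift hdeg hu hv huv hw huw
    have hxw_eq := ih hq hK (fun z hz ↦ hsub z (ne_of_mem_of_not_mem hz hu_q) (hred_q z hz)) hwK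
      (hsub v' (Ne.symm huv') hv') hxw hu'v'
    rcases Sym2.mem_iff.mp (hxw_eq ▸ Sym2.mem_mk_right x w) with rfl | rfl
    exacts [absurd (hred_q w q.end_mem_support) hw, absurd hv' hw]

theorem Hgraph.exists_square_path {I1 I2 : Finset V} {x y : redSet I1 I2}
    (h : (Hgraph G I1 I2).Reachable x y) :
    ∃ p : G.square.Walk x y, p.IsPath ∧ ∀ z ∈ p.support, z ∈ redSet I1 I2 := by
  classical
  obtain ⟨p⟩ := h
  let f : Hgraph G I1 I2 →g G.square := ⟨Subtype.val, fun h ↦ ⟨fun e ↦ h.1 (Subtype.ext e), h.2⟩⟩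
  refine ⟨(p.map f).bypass, Walk.bypass_isPath _, fun z hz ↦ ?_⟩
  have hz' := Walk.support_bypass_subset_support _ hz
  rw [Walk.support_map] at hz'
  obtain ⟨z, -, rfl⟩ := List.mem_map.mp hz'
  exact z.2

theorem at_most_one_red_P2_per_component_general
    {V : Type*} [Fintype V] (G : SimpleGraph V) [DecidableRel G.Adj]
    (hcubic : ∀ v : V, G.degree v = 3)
    (I1 I2 : Finset V) (hdisj : Disjoint I1 I2)
    (hI1 : FinsetIndep G I1) (hI2 : FinsetIndep G I2)
    (hmax : CondI G I1 I2) :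
    ∀ c : (Hgraph G I1 I2).ConnectedComponent,
      ∀ u ∈ c.supp, ∀ v ∈ c.supp, ∀ u' ∈ c.supp, ∀ v' ∈ c.supp,
        G.Adj (u : V) (v : V) → G.Adj (u' : V) (v' : V) →
          (u = u' ∧ v = v') ∨ (u = v' ∧ v = u') := by
  intro c u hu v _ u' hu' v' _ huv hu'v'
  obtain ⟨p, hp, hred⟩ := Hgraph.exists_square_path (ConnectedComponent.exact (hu.trans hu'.symm))
  have := IsMaxPair.sym2_eq_of_isPath (fun v ↦ (hcubic v).le) p hp ⟨hdisj, hI1, hI2, hmax⟩ hred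
    v.2 v'.2 huv hu'v'
  simpa [Sym2.eq_iff, Subtype.ext_iff] using this

/-- Under Conditions (I) and (II), every connected component of `H` contains at
most one pair of red vertices adjacent in `G` (at most one red `P2`). -/
theorem at_most_one_red_P2_per_component
    {V : Type*} [Fintype V] [DecidableEq V] (G : SimpleGraph V) [DecidableRel G.Adj]
    (hconn : G.Connected) (hcubic : ∀ v : V, G.degree v = 3)
    (I1 I2 : Finset V) (hdisj : Disjoint I1 I2)
    (hI1 : FinsetIndep G I1) (hI2 : FinsetIndep G I2)
    (hmax : CondI G I1 I2) (hmin : CondII G I1 I2) :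
    ∀ c : (Hgraph G I1 I2).ConnectedComponent,
      ∀ u ∈ c.supp, ∀ v ∈ c.supp, ∀ u' ∈ c.supp, ∀ v' ∈ c.supp,
        G.Adj (u : V) (v : V) → G.Adj (u' : V) (v' : V) →
          (u = u' ∧ v = v') ∨ (u = v' ∧ v = u') :=
  at_most_one_red_P2_per_component_general G hcubic I1 I2 hdisj hI1 hI2 hmax
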